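/- arXiv:1708.08552 — 2 statements merged into one kernel-verified Lean document; each statement's English description precedes it below -/
import Mathlib

section
/- Let 0 < β_t, β_{t+1}, and θ_t, θ_{t+1} ∈ (0,1] with θ_{t+1} > β_{t+1}. Suppose the sequence λ_t ∈ [0,1) satisfies λ_{t+1} ≤ [ (θ_t-β_t)/(θ_{t+1}-β_{t+1}) · λ_t² + (1+β_t-θ_t)/(θ_{t+1}-β_{t+1}) · λ_t ] / (1-λ_t)². If β_t ≡ β, θ_t ≡ θ are constant with ρ := (1+β-θ)/(θ-β) < 1, then there exists λ̄ > 0 and ρ' < 1 such that whenever λ_t ≤ λ̄ we have λ_{t+1} ≤ ρ'·λ_t; hence λ_t → 0 linearly once λ_t < λ̄. -/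
/-- Linear-quadratic contraction of the proximal Newton decrement (Phase II). -/
theorem stmt_12 (β θ : ℝ) (hβ : 0 < β) (hθ0 : 0 < θ) (hθ1 : θ ≤ 1) (hθβ : β < θ)
    (hρ : (1 + β - θ) / (θ - β) < 1)
    (lam : ℕ → ℝ) (hlam : ∀ t, 0 ≤ lam t ∧ lam t < 1)
    (hrec : ∀ t, lam (t + 1) ≤
      ((θ - β) / (θ - β) * (lam t) ^ 2 + (1 + β - θ) / (θ - β) * lam t) /
        (1 - lam t) ^ 2) :
    ∃ lambar > 0, ∃ ρ' < 1,
      ∀ t, lam t ≤ lambar → lam (t + 1) ≤ ρ' * lam t := by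
  have hd : (0:ℝ) < θ - β := by linarith
  set ρ := (1 + β - θ) / (θ - β) with hρdef
  have hρ0 : 0 < ρ := div_pos (by linarith) hd
  refine ⟨(1 - ρ) / (4 * (1 + ρ)), div_pos (by linarith) (by linarith), (1 + ρ) / 2, by linarith, ?_⟩
  intro t ht
  have h0 := (hlam t).1
  have h1 := (hlam t).2
  have hone : (θ - β) / (θ - β) = 1 := div_self (ne_of_gt hd)
  have hrec' := hrec t
  rw [hone] at hrec'
  have hden : (0:ℝ) < (1 - lam t) ^ 2 := by nlinarith
  have key : (1 * lam t ^ 2 + ρ * lam t) / (1 - lam t) ^ 2 ≤ (1 + ρ) / 2 * lam t := by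
    rw [div_le_iff₀ hden]
    have hlt : lam t ≤ (1 - ρ) / (4 * (1 + ρ)) := ht
    have h4 : lam t * (4 * (1 + ρ)) ≤ 1 - ρ := (le_div_iff₀ (by linarith)).mp hlt
    nlinarith [sq_nonneg (lam t), mul_nonneg h0 hρ0.le, sq_nonneg (1 - lam t),
      mul_nonneg h0 (sq_nonneg (1 - lam t)), mul_nonneg (mul_nonneg h0 h0) h0]
  exact hrec'.trans key
end

section
/- Let g be μ-strongly convex and L-smooth, R convex, ψ = g + R with minimum ψ*. Given w with ψ(w) - ψ* ≤ (μL/(2(L²-μ²)))·ε² for some ε > 0, let w⁺ = prox_{R/L}(w - (1/L)∇g(w)) and r = (L·I - ∇²ĝ)(w - w⁺) where the subproblem gradient is quadratic with Hessian B satisfying μI ⪯ B ⪯ LI and r = (L·I - B)(w - w⁺). Then ‖r‖_{B⁻¹} := (rᵀB⁻¹r)^{1/2} ≤ ε. -/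
/-!
The proximal-gradient step satisfies the sufficient-decrease bound
`(L/2)‖w⁺ - w‖² ≤ ψ(w) - ψ(w⁺) ≤ ψ(w) - ψ*`: the prox objective is `1`-strongly convex, so
comparing its values at its minimiser `w⁺` and at `w` gains `½‖w - w⁺‖²`, while `B ⪯ L I` puts
the quadratic `g` below its `L`-smooth model. On the other side, `μ I ⪯ B ⪯ L I` gives
`rᵀB⁻¹r ≤ μ⁻¹‖r‖² ≤ μ⁻¹(L - μ)²‖w - w⁺‖²`, and the tolerance is calibrated so that the product
of the two bounds is `(L - μ)/(L + μ) · ε² ≤ ε²`.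
-/

open Set Filter Topology
open scoped RealInnerProductSpace

section StrongConvexity

variable {E : Type*} [NormedAddCommGroup E] [InnerProductSpace ℝ E]

theorem IsMinOn.add_norm_sub_sq_le_of_strongConvexOn {s : Set E} {m : ℝ} {f : E → ℝ} {x₀ x : E}
    (hf : StrongConvexOn s m f) (hmin : IsMinOn f s x₀) (hx₀ : x₀ ∈ s) (hx : x ∈ s) :
    f x₀ + m / 2 * ‖x - x₀‖ ^ 2 ≤ f x := by
  set c := m / 2 * ‖x - x₀‖ ^ 2
  have hsegment : ∀ t ∈ Ioc (0 : ℝ) 1, f x₀ + (1 - t) * c ≤ f x := by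
    rintro t ⟨ht0, ht1⟩
    have hconv := hf.2 hx hx₀ ht0.le (sub_nonneg.2 ht1) (add_sub_cancel t 1)
    have hle : f x₀ ≤ f (t • x + (1 - t) • x₀) :=
      hmin (hf.1 hx hx₀ ht0.le (sub_nonneg.2 ht1) (add_sub_cancel t 1))
    simp only [smul_eq_mul] at hconv
    have : t * (f x₀ + (1 - t) * c) ≤ t * f x := by linear_combination hle + hconv
    exact le_of_mul_le_mul_left this ht0
  have hlim : Tendsto (fun t : ℝ => f x₀ + (1 - t) * c) (𝓝[>] 0) (𝓝 (f x₀ + c)) := by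
    have : Continuous fun t : ℝ => f x₀ + (1 - t) * c := by fun_prop
    simpa using this.continuousWithinAt.tendsto (x := 0) (s := Ioi 0)
  exact le_of_tendsto hlim (mem_of_superset (Ioc_mem_nhdsGT one_pos) hsegment)

theorem ConvexOn.strongConvexOn_add_norm_sub_sq {s : Set E} {f : E → ℝ} (hf : ConvexOn ℝ s f)
    (m : ℝ) (z : E) : StrongConvexOn s m fun x => f x + m / 2 * ‖x - z‖ ^ 2 := by
  rw [strongConvexOn_iff_convex]
  refine ((hf.add (((-m) • innerₛₗ ℝ z).convexOn hf.1)).add_const (m / 2 * ‖z‖ ^ 2)).congr ?_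
  intro x _
  simp only [Pi.add_apply, LinearMap.smul_apply, innerₛₗ_apply_apply, smul_eq_mul,
    norm_sub_sq_real, real_inner_comm z]
  ring

theorem proxGrad_sufficient_decrease {g R : E → ℝ} {G w wp : E} {L : ℝ}
    (hR : ConvexOn ℝ univ R) (hL : 0 < L)
    (hg : g wp ≤ g w + ⟪G, wp - w⟫ + L / 2 * ‖wp - w‖ ^ 2)
    (hprox : IsMinOn (fun u => R u / L + 1 / 2 * ‖u - (w - L⁻¹ • G)‖ ^ 2) univ wp) :
    g wp + R wp + L / 2 * ‖wp - w‖ ^ 2 ≤ g w + R w := by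
  have hRL : ConvexOn ℝ univ fun u => R u / L :=
    (hR.smul (inv_nonneg.2 hL.le)).congr fun u _ => by simp [div_eq_inv_mul]
  have h := hprox.add_norm_sub_sq_le_of_strongConvexOn
    (hRL.strongConvexOn_add_norm_sub_sq 1 _) (mem_univ wp) (mem_univ w)
  rw [show wp - (w - L⁻¹ • G) = (wp - w) + L⁻¹ • G by abel, sub_sub_cancel, norm_add_sq_real,
    real_inner_smul_right, real_inner_comm, norm_sub_rev w wp] at h
  have := mul_le_mul_of_nonneg_left h hL.le
  field_simp at this
  linarith

end StrongConvexity

theorem eq_add_inner_add_half_inner_of_hasGradientAt {E : Type*} [NormedAddCommGroup E]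
    [InnerProductSpace ℝ E] [CompleteSpace E] {g : E → ℝ} {g' : E → E} (A : E →ₗ[ℝ] E)
    {w : E} (hgrad : ∀ x, HasGradientAt g (g' x) x) (hg' : ∀ x, g' x = g' w + A (x - w))
    (x : E) : g x = g w + ⟪g' w, x - w⟫ + 1 / 2 * ⟪A (x - w), x - w⟫ := by
  set v := x - w
  have hline (t : ℝ) :
      HasDerivAt (fun s : ℝ => g (w + s • v)) (⟪g' w, v⟫ + t * ⟪A v, v⟫) t := by
    have hpath : HasDerivAt (fun s : ℝ => w + s • v) v t := by
      simpa using ((hasDerivAt_id t).smul_const v).const_add w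
    refine ((hgrad (w + t • v)).hasFDerivAt.comp_hasDerivAt t hpath).congr_deriv ?_
    simp [hg' (w + t • v)]
  have hmodel (t : ℝ) : HasDerivAt (fun s : ℝ => s * ⟪g' w, v⟫ + s ^ 2 / 2 * ⟪A v, v⟫)
      (⟪g' w, v⟫ + t * ⟪A v, v⟫) t := by
    refine (((hasDerivAt_id t).mul_const ⟪g' w, v⟫).add
      (((hasDerivAt_pow 2 t).div_const 2).mul_const ⟪A v, v⟫)).congr_deriv ?_
    simp
  have hdiff (t : ℝ) : HasDerivAt
      (fun s : ℝ => g (w + s • v) - (s * ⟪g' w, v⟫ + s ^ 2 / 2 * ⟪A v, v⟫)) 0 t := by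
    have := (hline t).sub (hmodel t)
    rwa [sub_self] at this
  have hconst := is_const_of_deriv_eq_zero (fun t => (hdiff t).differentiableAt)
    (fun t => (hdiff t).deriv) 1 0
  simp only [one_smul, zero_smul, add_zero, v, add_sub_cancel] at hconst
  linarith

theorem EuclideanSpace.ofLp_dotProduct_ofLp_self {n : Type*} [Fintype n]
    (v : EuclideanSpace ℝ n) : v.ofLp ⬝ᵥ v.ofLp = ‖v‖ ^ 2 := by
  rw [← real_inner_self_eq_norm_sq, EuclideanSpace.inner_eq_star_dotProduct, star_trivial]

namespace Matrix

open scoped MatrixOrder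

variable {n : Type*} [Fintype n]

theorem dotProduct_mulVec_le_of_le {A B : Matrix n n ℝ} (h : A ≤ B) (v : n → ℝ) :
    v ⬝ᵥ A *ᵥ v ≤ v ⬝ᵥ B *ᵥ v := by
  simpa [sub_mulVec, dotProduct_sub] using (le_iff.mp h).dotProduct_mulVec_nonneg v

theorem dotProduct_mul_self_mulVec {A : Matrix n n ℝ} (hA : A.IsHermitian) (v : n → ℝ) :
    v ⬝ᵥ (A * A) *ᵥ v = A *ᵥ v ⬝ᵥ A *ᵥ v := by
  have hT : Aᵀ = A := by simpa [conjTranspose_eq_transpose_of_trivial] using hA.eq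
  rw [← mulVec_mulVec, dotProduct_mulVec, ← mulVec_transpose, hT]

variable [DecidableEq n]

theorem mul_self_le_smul_of_le_smul_one {A : Matrix n n ℝ} {c : ℝ} (hA : 0 ≤ A)
    (hc : A ≤ c • 1) : A * A ≤ c • A := by
  obtain ⟨S, hS, rfl⟩ : ∃ S, 0 ≤ S ∧ S * S = A :=
    ⟨CFC.sqrt A, CFC.sqrt_nonneg A, CFC.sqrt_mul_sqrt_self A hA⟩
  calc S * S * (S * S) = S * (S * S) * S := by simp only [mul_assoc]
    _ ≤ S * (c • 1) * S := conjugate_le_conjugate_of_nonneg hc hS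
    _ = c • (S * S) := by simp

theorem smul_le_mul_self_of_smul_one_le {A : Matrix n n ℝ} {c : ℝ} (hc0 : 0 ≤ c)
    (hc : c • 1 ≤ A) : c • A ≤ A * A := by
  have hA : 0 ≤ A := (nonneg_iff_posSemidef.mpr (PosSemidef.one.smul hc0)).trans hc
  obtain ⟨S, hS, rfl⟩ : ∃ S, 0 ≤ S ∧ S * S = A :=
    ⟨CFC.sqrt A, CFC.sqrt_nonneg A, CFC.sqrt_mul_sqrt_self A hA⟩
  calc c • (S * S) = S * (c • 1) * S := by simp
    _ ≤ S * (S * S) * S := conjugate_le_conjugate_of_nonneg hc hS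
    _ = S * S * (S * S) := by simp only [mul_assoc]

theorem mulVec_dotProduct_mulVec_le {A : Matrix n n ℝ} {c : ℝ} (hc0 : 0 ≤ c) (hA : 0 ≤ A)
    (hc : A ≤ c • 1) (v : n → ℝ) : A *ᵥ v ⬝ᵥ A *ᵥ v ≤ c ^ 2 * (v ⬝ᵥ v) := by
  calc A *ᵥ v ⬝ᵥ A *ᵥ v = v ⬝ᵥ (A * A) *ᵥ v :=
        (dotProduct_mul_self_mulVec (nonneg_iff_posSemidef.mp hA).isHermitian v).symm
    _ ≤ c * (v ⬝ᵥ A *ᵥ v) := by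
      simpa [smul_mulVec] using
        dotProduct_mulVec_le_of_le (mul_self_le_smul_of_le_smul_one hA hc) v
    _ ≤ c * (c * (v ⬝ᵥ v)) := by
      gcongr
      simpa [smul_mulVec] using dotProduct_mulVec_le_of_le hc v
    _ = c ^ 2 * (v ⬝ᵥ v) := by ring

theorem dotProduct_inv_mulVec_le {B : Matrix n n ℝ} {μ : ℝ} (hμ : 0 < μ) (h : μ • 1 ≤ B)
    (r : n → ℝ) : r ⬝ᵥ B⁻¹ *ᵥ r ≤ μ⁻¹ * (r ⬝ᵥ r) := by
  have hB : B.PosDef := by simpa using PosDef.posSemidef_add h (PosDef.one.smul hμ)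
  set y := B⁻¹ *ᵥ r
  have hy : B *ᵥ y = r := by
    rw [mulVec_mulVec, mul_nonsing_inv _ ((isUnit_iff_isUnit_det B).mp hB.isUnit), one_mulVec]
  have hBB : μ * (y ⬝ᵥ B *ᵥ y) ≤ B *ᵥ y ⬝ᵥ B *ᵥ y := by
    rw [← dotProduct_mul_self_mulVec hB.isHermitian]
    simpa [smul_mulVec] using
      dotProduct_mulVec_le_of_le (smul_le_mul_self_of_smul_one_le hμ.le h) y
  rw [hy, dotProduct_comm] at hBB
  rwa [le_inv_mul_iff₀ hμ]

theorem residual_dotProduct_inv_mulVec_le {B : Matrix n n ℝ} {μ L : ℝ} (hμ : 0 < μ)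
    (hμL : μ ≤ L) (hlow : μ • 1 ≤ B) (hup : B ≤ L • 1) (v : n → ℝ) :
    (L • 1 - B) *ᵥ v ⬝ᵥ B⁻¹ *ᵥ ((L • 1 - B) *ᵥ v) ≤ μ⁻¹ * ((L - μ) ^ 2 * (v ⬝ᵥ v)) := by
  have hA : 0 ≤ L • 1 - B := sub_nonneg.2 hup
  have hAc : L • 1 - B ≤ (L - μ) • 1 := by
    rw [sub_smul]
    exact sub_le_sub_left hlow _
  calc _ ≤ μ⁻¹ * ((L • 1 - B) *ᵥ v ⬝ᵥ (L • 1 - B) *ᵥ v) := dotProduct_inv_mulVec_le hμ hlow _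
    _ ≤ μ⁻¹ * ((L - μ) ^ 2 * (v ⬝ᵥ v)) := by
      gcongr
      exact mulVec_dotProduct_mulVec_le (sub_nonneg.2 hμL) hA hAc v

theorem inner_toLpLin_self_le {B : Matrix n n ℝ} {L : ℝ} (hup : B ≤ L • 1)
    (v : EuclideanSpace ℝ n) : ⟪toLpLin 2 2 B v, v⟫ ≤ L * ‖v‖ ^ 2 := by
  rw [← real_inner_self_eq_norm_sq, EuclideanSpace.inner_eq_star_dotProduct,
    EuclideanSpace.inner_eq_star_dotProduct]
  simpa [smul_mulVec, toLpLin_apply] using dotProduct_mulVec_le_of_le hup v.ofLp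

end Matrix

theorem inv_mul_sub_sq_mul_le_sq {μ L N ε : ℝ} (hμ : 0 < μ) (hμL : μ < L)
    (h : L / 2 * N ≤ μ * L / (2 * (L ^ 2 - μ ^ 2)) * ε ^ 2) :
    μ⁻¹ * ((L - μ) ^ 2 * N) ≤ ε ^ 2 := by
  have hL : 0 < L := hμ.trans hμL
  have hLμ : 0 < L ^ 2 - μ ^ 2 := by nlinarith
  have hN : N ≤ μ / (L ^ 2 - μ ^ 2) * ε ^ 2 := by
    refine le_of_mul_le_mul_left (h.trans_eq ?_) (half_pos hL)
    field_simp
  calc μ⁻¹ * ((L - μ) ^ 2 * N) ≤ μ⁻¹ * ((L - μ) ^ 2 * (μ / (L ^ 2 - μ ^ 2) * ε ^ 2)) := by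
        gcongr
    _ = (L - μ) / (L + μ) * ε ^ 2 := by
        field_simp
        ring
    _ ≤ ε ^ 2 :=
        mul_le_of_le_one_left (sq_nonneg ε) ((div_le_one (by linarith)).2 (by linarith))

theorem stmt_17_general {d : ℕ} (g R : EuclideanSpace ℝ (Fin d) → ℝ)
    (g' : EuclideanSpace ℝ (Fin d) → EuclideanSpace ℝ (Fin d))
    (μ L ε : ℝ) (hμ : 0 < μ) (hμL : μ < L) (hε : 0 < ε)
    (hgrad : ∀ x, HasGradientAt g (g' x) x)
    (hR : ConvexOn ℝ Set.univ R)
    (wmin : EuclideanSpace ℝ (Fin d))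
    (hmin : IsMinOn (fun u => g u + R u) Set.univ wmin)
    (w wp : EuclideanSpace ℝ (Fin d))
    (htol : (g w + R w) - (g wmin + R wmin) ≤ μ * L / (2 * (L ^ 2 - μ ^ 2)) * ε ^ 2)
    (hprox : IsMinOn (fun u => R u / L + (1 / 2) * ‖u - (w - L⁻¹ • g' w)‖ ^ 2)
      Set.univ wp)
    (B : Matrix (Fin d) (Fin d) ℝ)
    (hBlow : (B - μ • (1 : Matrix (Fin d) (Fin d) ℝ)).PosSemidef)
    (hBup : (L • (1 : Matrix (Fin d) (Fin d) ℝ) - B).PosSemidef)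
    (hquad : ∀ x : EuclideanSpace ℝ (Fin d),
      g' x = g' w + (WithLp.equiv 2 (Fin d → ℝ)).symm (B.mulVec (x - w)))
    (r : Fin d → ℝ)
    (hr : r = (L • (1 : Matrix (Fin d) (Fin d) ℝ) - B).mulVec (w - wp)) :
    Real.sqrt (dotProduct r (B⁻¹.mulVec r)) ≤ ε := by
  -- `hBlow`, `hBup` are the Loewner bounds `μ • 1 ≤ B ≤ L • 1` of `MatrixOrder` as stated, and
  -- `hquad` is `g' x = g' w + toLpLin 2 2 B (x - w)` up to unfolding.
  have hL : 0 < L := hμ.trans hμL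
  have hdescent : g wp ≤ g w + ⟪g' w, wp - w⟫ + L / 2 * ‖wp - w‖ ^ 2 := by
    rw [eq_add_inner_add_half_inner_of_hasGradientAt (Matrix.toLpLin 2 2 B) hgrad hquad wp]
    linarith [Matrix.inner_toLpLin_self_le hBup (wp - w)]
  have hstep : L / 2 * ‖w - wp‖ ^ 2 ≤ μ * L / (2 * (L ^ 2 - μ ^ 2)) * ε ^ 2 := by
    have hdecrease := proxGrad_sufficient_decrease hR hL hdescent hprox
    have hopt : g wmin + R wmin ≤ g wp + R wp := hmin (mem_univ wp)
    rw [norm_sub_rev]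
    linarith
  have hres := Matrix.residual_dotProduct_inv_mulVec_le hμ hμL.le hBlow hBup (w - wp).ofLp
  rw [← show r = (L • 1 - B).mulVec (w - wp).ofLp from hr,
    EuclideanSpace.ofLp_dotProduct_ofLp_self] at hres
  exact Real.sqrt_le_iff.2 ⟨hε.le, hres.trans (inv_mul_sub_sq_mul_le_sq hμ hμL hstep)⟩

/-- Converting a function-value tolerance on the subproblem into a dual-norm
bound on the subgradient residual. -/
theorem stmt_17 {d : ℕ} (g R : EuclideanSpace ℝ (Fin d) → ℝ)
    (g' : EuclideanSpace ℝ (Fin d) → EuclideanSpace ℝ (Fin d))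
    (μ L ε : ℝ) (hμ : 0 < μ) (hμL : μ < L) (hε : 0 < ε)
    (hsc : StrongConvexOn Set.univ μ g)
    (hgrad : ∀ x, HasGradientAt g (g' x) x)
    (hlip : LipschitzWith (Real.toNNReal L) g')
    (hR : ConvexOn ℝ Set.univ R)
    (wmin : EuclideanSpace ℝ (Fin d))
    (hmin : IsMinOn (fun u => g u + R u) Set.univ wmin)
    (w wp : EuclideanSpace ℝ (Fin d))
    (htol : (g w + R w) - (g wmin + R wmin) ≤ μ * L / (2 * (L ^ 2 - μ ^ 2)) * ε ^ 2)
    (hprox : IsMinOn (fun u => R u / L + (1 / 2) * ‖u - (w - L⁻¹ • g' w)‖ ^ 2)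
      Set.univ wp)
    (B : Matrix (Fin d) (Fin d) ℝ) (hBsym : B.IsSymm)
    (hBlow : (B - μ • (1 : Matrix (Fin d) (Fin d) ℝ)).PosSemidef)
    (hBup : (L • (1 : Matrix (Fin d) (Fin d) ℝ) - B).PosSemidef)
    (hquad : ∀ x : EuclideanSpace ℝ (Fin d),
      g' x = g' w + (WithLp.equiv 2 (Fin d → ℝ)).symm (B.mulVec (x - w)))
    (r : Fin d → ℝ)
    (hr : r = (L • (1 : Matrix (Fin d) (Fin d) ℝ) - B).mulVec (w - wp)) :
    Real.sqrt (dotProduct r (B⁻¹.mulVec r)) ≤ ε :=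
  stmt_17_general g R g' μ L ε hμ hμL hε hgrad hR wmin hmin w wp htol hprox B hBlow hBup hquad r hr
end
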